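/- Every element of the field Q(√(Q^+)) ⊆ R generated over Q by the square roots of all positive rationals has a unique representation of the form r_1√n_1 + ... + r_k√n_k where r_i are nonzero rationals and n_1 < n_2 < ... < n_k are squarefree positive integers. -/

import Mathlib

/-!
Let `V S` (`sqrtField S`) be the `ℚ`-span of the `√n`, `n` squarefree with all prime factors in
`S`. Since `√m √n = √(mn)` and `mn = k² r` with `r` squarefree, `V S` is a ring of algebraic
numbers, hence a field; for `S` the set of all primes it contains every `√q`, which gives existence.
Uniqueness is linear independence, proved by induction on a finite set `S` of primes. Every element
of `V (S ∪ {q})` is `a + b √q` with `a, b ∈ V S`; squaring `√m = a + b √q` shows `√m ∉ V S` for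
every squarefree `m ≠ 1` coprime to `S`. So `1, √q` are independent over the field `V S`, and the
products of the `ℚ`-independent `√n ∈ V S` with `1, √q`, which are exactly the `√n` spanning
`V (S ∪ {q})`, are again `ℚ`-independent.
-/

open Real Submodule

lemma Squarefree.eq_one_of_isSquare {m : ℕ} (hm : Squarefree m) (hsq : IsSquare m) : m = 1 := by
  obtain ⟨r, rfl⟩ := hsq
  rw [Nat.isUnit_iff.1 (hm r dvd_rfl), mul_one]

lemma Nat.Prime.squarefree_mul_of_notMem_primeFactors {m q : ℕ} (hq : q.Prime)
    (hm : Squarefree m) (hqm : q ∉ m.primeFactors) : Squarefree (m * q) :=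
  Nat.squarefree_mul_iff.2 ⟨((Nat.Prime.coprime_iff_not_dvd hq).2 fun h =>
    hqm (Nat.mem_primeFactors.2 ⟨hq, h, hm.ne_zero⟩)).symm, hm, hq.squarefree⟩

lemma linearIndependent_one_pair_of_notMem {K L : Type*} [Field K] [Field L] [Algebra K L]
    {F : IntermediateField K L} {s : L} (hs : s ∉ F) : LinearIndependent F ![1, s] :=
  (LinearIndependent.pair_iff' one_ne_zero).2 fun a ha => hs (by
    rw [← ha, Algebra.smul_def, mul_one]
    exact a.2)

def squarefreeIn (S : Set ℕ) : Set ℕ := {n | Squarefree n ∧ ↑n.primeFactors ⊆ S}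

noncomputable def sqrtSpan (S : Set ℕ) : Submodule ℚ ℝ :=
  span ℚ ((fun n : ℕ => √(n : ℝ)) '' squarefreeIn S)

section

variable {S : Set ℕ}

lemma squarefreeIn_empty : squarefreeIn ∅ = {1} := by
  ext n
  simp only [squarefreeIn, Set.subset_empty_iff, Finset.coe_eq_empty, Nat.primeFactors_eq_empty,
    Set.mem_ofPred_eq, Set.mem_singleton_iff]
  constructor
  · rintro ⟨hn, rfl | rfl⟩
    · exact absurd hn not_squarefree_zero
    · rfl
  · rintro rfl
    exact ⟨squarefree_one, Or.inr rfl⟩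

lemma squarefreeIn_insert {q : ℕ} (hq : q.Prime) (hqS : q ∉ S) :
    squarefreeIn (insert q S) = squarefreeIn S ∪ (· * q) '' squarefreeIn S := by
  ext n
  simp only [squarefreeIn, Set.mem_union, Set.mem_image, Set.mem_ofPred_eq]
  constructor
  · rintro ⟨hn, hnS⟩
    by_cases hqn : q ∣ n
    · obtain ⟨m, rfl⟩ := hqn
      obtain ⟨hqm, -, hm⟩ := Nat.squarefree_mul_iff.1 hn
      refine Or.inr ⟨m, ⟨hm, fun p hp => (hnS ?_).resolve_left ?_⟩, mul_comm m q⟩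
      · exact Nat.primeFactors_mono (dvd_mul_left m q) hn.ne_zero hp
      · rintro rfl
        exact (Nat.Prime.coprime_iff_not_dvd hq).1 hqm (Nat.dvd_of_mem_primeFactors hp)
    · left
      refine ⟨hn, fun p hp => (hnS hp).resolve_left ?_⟩
      rintro rfl
      exact hqn (Nat.dvd_of_mem_primeFactors hp)
  · rintro (⟨hn, hnS⟩ | ⟨m, ⟨hm, hmS⟩, rfl⟩)
    · exact ⟨hn, hnS.trans (Set.subset_insert _ _)⟩
    · refine ⟨hq.squarefree_mul_of_notMem_primeFactors hm fun h => hqS (hmS h), ?_⟩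
      rw [Nat.primeFactors_mul hm.ne_zero hq.ne_zero, hq.primeFactors, Finset.coe_union,
        Finset.coe_singleton, Set.union_singleton]
      exact Set.insert_subset_insert hmS

lemma sqrt_mem_sqrtSpan {N : ℕ} (hN : ↑N.primeFactors ⊆ S) : √(N : ℝ) ∈ sqrtSpan S := by
  obtain ⟨a, b, rfl, ha⟩ := Nat.sq_mul_squarefree N
  rcases eq_or_ne b 0 with rfl | hb
  · simp
  have hsqrt : √((b ^ 2 * a : ℕ) : ℝ) = (b : ℚ) • √(a : ℝ) := by
    push_cast
    rw [Real.sqrt_mul (by positivity), Real.sqrt_sq (by positivity), Rat.smul_def, Rat.cast_natCast]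
  have haS : ↑a.primeFactors ⊆ S := (Finset.coe_subset.2
    (Nat.primeFactors_mono (dvd_mul_left a _) (by simp [hb, ha.ne_zero]))).trans hN
  rw [hsqrt]
  exact smul_mem _ _ (subset_span ⟨a, ⟨ha, haS⟩, rfl⟩)

lemma mul_mem_sqrtSpan {x y : ℝ} (hx : x ∈ sqrtSpan S) (hy : y ∈ sqrtSpan S) :
    x * y ∈ sqrtSpan S := by
  have hle : sqrtSpan S * sqrtSpan S ≤ sqrtSpan S := by
    rw [sqrtSpan, span_mul_span, span_le]
    rintro _ ⟨_, ⟨m, ⟨hm, hmS⟩, rfl⟩, _, ⟨n, ⟨hn, hnS⟩, rfl⟩, rfl⟩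
    have hmn : √((m * n : ℕ) : ℝ) = √(m : ℝ) * √(n : ℝ) := by
      push_cast; exact Real.sqrt_mul (by positivity) _
    show √(m : ℝ) * √(n : ℝ) ∈ sqrtSpan S
    rw [← hmn]
    apply sqrt_mem_sqrtSpan
    rw [Nat.primeFactors_mul hm.ne_zero hn.ne_zero, Finset.coe_union]
    exact Set.union_subset hmS hnS
  exact hle (mul_mem_mul hx hy)

noncomputable def sqrtSubalgebra (S : Set ℕ) : Subalgebra ℚ ℝ :=
  (sqrtSpan S).toSubalgebra (by simpa using sqrt_mem_sqrtSpan (S := S) (N := 1) (by simp))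
    fun _ _ => mul_mem_sqrtSpan

lemma isIntegral_of_mem_sqrtSpan {x : ℝ} (hx : x ∈ sqrtSpan S) : IsIntegral ℚ x := by
  have hle : sqrtSpan S ≤ Subalgebra.toSubmodule (integralClosure ℚ ℝ) := by
    refine span_le.2 ?_
    rintro _ ⟨n, -, rfl⟩
    refine IsIntegral.of_pow two_pos ?_
    rw [Real.sq_sqrt (by positivity)]
    exact isIntegral_algebraMap (x := (n : ℚ))
  exact hle hx

noncomputable def sqrtField (S : Set ℕ) : IntermediateField ℚ ℝ :=
  (sqrtSubalgebra S).toIntermediateField fun x hx =>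
    (sqrtSubalgebra S).inv_mem_of_algebraic (x := ⟨x, hx⟩)
      (isIntegral_of_mem_sqrtSpan hx).isAlgebraic

lemma mem_sqrtField {x : ℝ} : x ∈ sqrtField S ↔ x ∈ sqrtSpan S := Iff.rfl

lemma exists_add_mul_sqrt_of_mem_sqrtField {q : ℕ} (hq : q.Prime) (hqS : q ∉ S) {x : ℝ}
    (hx : x ∈ sqrtField (insert q S)) : ∃ a b : sqrtField S, x = a + b * √(q : ℝ) := by
  have hmul : span ℚ ((fun n : ℕ => √(n : ℝ)) '' ((· * q) '' squarefreeIn S)) =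
      (sqrtSpan S).map (LinearMap.mulRight ℚ √(q : ℝ)) := by
    rw [sqrtSpan, map_span, Set.image_image, Set.image_image]
    congr! 2 with m
    push_cast
    exact Real.sqrt_mul (by positivity) _
  rw [mem_sqrtField, sqrtSpan, squarefreeIn_insert hq hqS, Set.image_union, span_union, hmul,
    mem_sup] at hx
  obtain ⟨a, ha, _, ⟨b, hb, rfl⟩, rfl⟩ := hx
  exact ⟨⟨a, ha⟩, ⟨b, hb⟩, rfl⟩

end

lemma sqrt_notMem_sqrtField (S : Finset ℕ) (hS : ∀ p ∈ S, p.Prime) {m : ℕ} (hm : Squarefree m)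
    (hm1 : m ≠ 1) (hmS : Disjoint m.primeFactors S) : √(m : ℝ) ∉ sqrtField S := by
  induction S using Finset.induction_on generalizing m with
  | empty =>
    rw [Finset.coe_empty, mem_sqrtField, sqrtSpan, squarefreeIn_empty, Set.image_singleton,
      mem_span_singleton]
    rintro ⟨r, hr⟩
    rw [Nat.cast_one, Real.sqrt_one, Rat.smul_def, mul_one] at hr
    exact (irrational_sqrt_natCast_iff.2 fun h => hm1 (hm.eq_one_of_isSquare h)).ne_rat r hr.symm
  | insert q S hqS ih =>
    have hq := hS q (Finset.mem_insert_self q S)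
    replace hS := fun p hp => hS p (Finset.mem_insert_of_mem hp)
    rw [Finset.disjoint_insert_right] at hmS
    have hsqrtq : √(q : ℝ) ∉ sqrtField S :=
      ih hS hq.squarefree hq.one_lt.ne' (by simpa [hq.primeFactors] using hqS)
    intro hx
    rw [Finset.coe_insert] at hx
    obtain ⟨a, b, hab⟩ := exists_add_mul_sqrt_of_mem_sqrtField hq hqS hx
    have hq2 : √(q : ℝ) * √(q : ℝ) = q := Real.mul_self_sqrt (by positivity)
    have hm2 : √(m : ℝ) * √(m : ℝ) = m := Real.mul_self_sqrt (by positivity)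
    -- squaring `√m = a + b √q` and comparing coefficients of `1, √q` over `sqrtField S`
    have hab0 : a * b = 0 := by
      have hsquare : (a * a + q * b * b - m) • (1 : ℝ) + (2 * (a * b)) • √(q : ℝ) = 0 := by
        simp only [Algebra.smul_def, IntermediateField.algebraMap_apply]
        push_cast
        rw [show ((2 : sqrtField S) : ℝ) = 2 from rfl]
        linear_combination (-(√(m : ℝ) + a + b * √(q : ℝ))) * hab + hm2 - (b : ℝ) ^ 2 * hq2
      have hli := linearIndependent_one_pair_of_notMem hsqrtq
      have hcoeff := LinearIndependent.pair_iff.1 hli (a * a + q * b * b - m) (2 * (a * b)) hsquare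
      exact (mul_eq_zero.1 hcoeff.2).resolve_left two_ne_zero
    rcases mul_eq_zero.1 hab0 with ha | hb
    · have hmq : √((m * q : ℕ) : ℝ) = b * q := by
        push_cast
        rw [Real.sqrt_mul (by positivity), hab, ha, ZeroMemClass.coe_zero]
        linear_combination (b : ℝ) * hq2
      refine ih hS (hq.squarefree_mul_of_notMem_primeFactors hm hmS.1)
        (fun h => hq.one_lt.ne' (Nat.eq_one_of_mul_eq_one_left h)) ?_ ?_
      · rw [Nat.primeFactors_mul hm.ne_zero hq.ne_zero, hq.primeFactors,
          Finset.disjoint_union_left, Finset.disjoint_singleton_left]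
        exact ⟨hmS.2, hqS⟩
      · rw [hmq]
        exact mul_mem b.2 (natCast_mem _ q)
    · exact ih hS hm hm1 hmS.2 (by simp [hab, hb])

lemma linearIndepOn_sqrt_squarefreeIn (S : Finset ℕ) (hS : ∀ p ∈ S, p.Prime) :
    LinearIndepOn ℚ (fun n : ℕ => √(n : ℝ)) (squarefreeIn S) := by
  induction S using Finset.induction_on with
  | empty =>
    rw [Finset.coe_empty, squarefreeIn_empty, linearIndepOn_singleton_iff]
    simp
  | insert q S hqS ih =>
    have hq := hS q (Finset.mem_insert_self q S)
    replace hS := fun p hp => hS p (Finset.mem_insert_of_mem hp)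
    let b : squarefreeIn S → sqrtField S := fun n => ⟨√(n : ℝ), subset_span ⟨n, n.2, rfl⟩⟩
    have hb : LinearIndependent ℚ b :=
      LinearIndependent.of_comp (sqrtField S).val.toLinearMap (ih hS)
    have hc := linearIndependent_one_pair_of_notMem (sqrt_notMem_sqrtField S hS hq.squarefree
      hq.one_lt.ne' (by simpa [hq.primeFactors] using hqS))
    have hbc := linearIndependent_smul hb hc
    let f : squarefreeIn S × Fin 2 → ℕ := fun p => p.1 * q ^ (p.2 : ℕ)
    have hf : (fun p => b p.1 • ![1, √(q : ℝ)] p.2) = (fun n : ℕ => √(n : ℝ)) ∘ f := by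
      ext ⟨n, i⟩
      fin_cases i
      · simp [f, b, Algebra.smul_def]
      · simp [f, b, Algebra.smul_def, Real.sqrt_mul]
    have hrange : Set.range f = squarefreeIn ↑(insert q S) := by
      rw [Finset.coe_insert, squarefreeIn_insert hq hqS]
      ext n
      simp [f, Fin.exists_fin_two, exists_or]
    rw [← hrange, ← Set.image_univ]
    exact LinearIndepOn.image_of_comp _ _ (linearIndepOn_univ_iff.2 (hf ▸ hbc))

lemma linearIndepOn_sqrt_squarefree :
    LinearIndepOn ℚ (fun n : ℕ => √(n : ℝ)) (squarefreeIn Set.univ) := by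
  refine linearIndepOn_of_finite _ fun t ht htfin => ?_
  refine (linearIndepOn_sqrt_squarefreeIn (htfin.toFinset.biUnion Nat.primeFactors)
    fun p hp => ?_).mono fun n hn => ⟨(ht hn).1, fun p hp => ?_⟩
  · obtain ⟨n, -, hpn⟩ := Finset.mem_biUnion.1 hp
    exact Nat.prime_of_mem_primeFactors hpn
  · simp only [Finset.coe_biUnion, Set.Finite.coe_toFinset, Set.mem_iUnion]
    exact ⟨n, hn, hp⟩

lemma adjoin_sqrt_rat_le_sqrtField :
    IntermediateField.adjoin ℚ {y : ℝ | ∃ q : ℚ, 0 < q ∧ y = √(q : ℝ)} ≤ sqrtField Set.univ := by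
  refine IntermediateField.adjoin_le_iff.2 ?_
  rintro _ ⟨q, hq, rfl⟩
  obtain ⟨n, hn⟩ := Int.eq_ofNat_of_zero_le (Rat.num_nonneg.2 hq.le)
  have hsqrt : √(q : ℝ) = √(n : ℝ) / √(q.den : ℝ) := by
    rw [Rat.cast_def, hn, Int.cast_natCast, Real.sqrt_div (Nat.cast_nonneg n)]
  rw [hsqrt]
  exact div_mem (sqrt_mem_sqrtSpan (Set.subset_univ _)) (sqrt_mem_sqrtSpan (Set.subset_univ _))

/-- Every element of ℚ(√ℚ⁺) ⊆ ℝ has a unique representation ∑ r_i √n_i with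
r_i nonzero rationals and n_i distinct squarefree positive integers. -/
theorem stmt6 (x : ℝ)
    (hx : x ∈ IntermediateField.adjoin ℚ {y : ℝ | ∃ q : ℚ, 0 < q ∧ y = Real.sqrt q}) :
    ∃! c : ℕ →₀ ℚ, (∀ n ∈ c.support, Squarefree n) ∧
      x = ∑ n ∈ c.support, (c n : ℝ) * Real.sqrt n := by
  have hsum (c : ℕ →₀ ℚ) : ∑ n ∈ c.support, (c n : ℝ) * √(n : ℝ) =
      Finsupp.linearCombination ℚ (fun n : ℕ => √(n : ℝ)) c := by
    simp [Finsupp.linearCombination_apply, Finsupp.sum, Rat.smul_def]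
  have hsupp (c : ℕ →₀ ℚ) : (∀ n ∈ c.support, Squarefree n) ↔
      c ∈ Finsupp.supported ℚ ℚ (squarefreeIn Set.univ) := by
    simp [Finsupp.mem_supported, Set.subset_def, squarefreeIn]
  simp only [hsum, hsupp]
  obtain ⟨c, hc, rfl⟩ :=
    (Finsupp.mem_span_image_iff_linearCombination ℚ).1 (adjoin_sqrt_rat_le_sqrtField hx)
  exact ⟨c, ⟨hc, rfl⟩, fun c' ⟨hc', h⟩ =>
    linearIndepOn_iffₛ.1 linearIndepOn_sqrt_squarefree c' hc' c hc h.symm⟩
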